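/- Let L be a recurrent language on A containing A. Then the group of the Rauzy graph G_{1,1} at any vertex is a free group of rank n − c + 1, where n = Card(A) and c is the number of connected components of the extension graph of the empty word. -/

import Mathlib

open List

section Prelude

variable {A V : Type*}

structure LDigraph (V A : Type*) where
  E : Set (V × A × V)

namespace LDigraph

inductive Step (G : LDigraph V A) : V → V → FreeGroup A → Prop
  | fwd {x a y} : (x, a, y) ∈ G.E → Step G x y (FreeGroup.of a)
  | bwd {x a y} : (x, a, y) ∈ G.E → Step G y x (FreeGroup.of a)⁻¹

inductive PathLabel (G : LDigraph V A) : V → V → FreeGroup A → Prop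
  | nil (x) : PathLabel G x x 1
  | cons {x y z g h} : G.Step x y g → PathLabel G y z h → PathLabel G x z (g * h)

inductive PosPath (G : LDigraph V A) : V → V → List A → Prop
  | nil (x) : PosPath G x x []
  | cons {x a y z w} : (x, a, y) ∈ G.E → PosPath G y z w → PosPath G x z (a :: w)

def loopLabels (G : LDigraph V A) (x : V) : Set (FreeGroup A) :=
  {g | G.PathLabel x x g}

def Connected (G : LDigraph V A) : Prop :=
  ∀ x y : V, ∃ g, G.PathLabel x y g

def quot (G : LDigraph V A) (r : Setoid V) : LDigraph (Quotient r) A :=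
  ⟨{e | ∃ x a y, (x, a, y) ∈ G.E ∧ e = (Quotient.mk r x, a, Quotient.mk r y)}⟩

def GroupPreserving (G : LDigraph V A) (r : Setoid V) : Prop :=
  ∀ x : V, G.loopLabels x = (G.quot r).loopLabels (Quotient.mk r x)

end LDigraph

/-- The image of a word in the free group. -/
def wordToFG (w : List A) : FreeGroup A := (w.map FreeGroup.of).prod

def FactorClosed (L : Set (List A)) : Prop := ∀ w ∈ L, ∀ u : List A, u <:+: w → u ∈ L

def Recurrent (L : Set (List A)) : Prop :=
  FactorClosed L ∧ ∀ u ∈ L, ∀ v ∈ L, ∃ w : List A, w ≠ [] ∧ u ++ w ++ v ∈ L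

def UniformlyRecurrent (L : Set (List A)) : Prop :=
  FactorClosed L ∧ ∀ u ∈ L, ∃ N : ℕ, ∀ w ∈ L, N ≤ w.length → u <:+: w

/-- The Rauzy graph `G_{m,k}`: vertices are the words of `L` of length `m`, and every
word `x ∈ L` of length `m+1` gives an edge from `init x` to `tail x` labeled `x(k)`. -/
def rauzy (L : Set (List A)) (m k : ℕ) : LDigraph (List A) A :=
  ⟨{e | ∃ x a, x ∈ L ∧ x.length = m + 1 ∧ x[k]? = some a ∧ e = (x.dropLast, a, x.tail)}⟩

/-- The extension graph `E(w)`, a bipartite graph on two copies of `A`. -/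
def extGraph (L : Set (List A)) (w : List A) : SimpleGraph (A ⊕ A) where
  Adj x y := ∃ a b, a :: (w ++ [b]) ∈ L ∧
    ((x = Sum.inl a ∧ y = Sum.inr b) ∨ (x = Sum.inr b ∧ y = Sum.inl a))
  symm := ⟨by rintro x y ⟨a, b, h, hc⟩; exact ⟨a, b, h, by tauto⟩⟩
  loopless := ⟨by
    rintro x ⟨a, b, h, ⟨h1, h2⟩ | ⟨h1, h2⟩⟩ <;> rw [h1] at h2 <;> exact absurd h2 (by simp)⟩

/-- The set of genuine vertices of the extension graph of `w`. -/
def extVerts (L : Set (List A)) (w : List A) : Set (A ⊕ A) :=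
  Sum.elim (fun a => a :: w ∈ L) (fun b => w ++ [b] ∈ L)

/-- The extension graph of `w` is connected (all genuine vertices are mutually reachable). -/
def ExtConnected (L : Set (List A)) (w : List A) : Prop :=
  ∀ x ∈ extVerts L w, ∀ y ∈ extVerts L w, (extGraph L w).Reachable x y

/-- The extension graph of order `(d,d)` of the word `y`. -/
def extGraphK (L : Set (List A)) (d : ℕ) (y : List A) : SimpleGraph (List A ⊕ List A) where
  Adj p q := ∃ u v : List A, u.length = d ∧ v.length = d ∧ u ++ y ++ v ∈ L ∧
    ((p = Sum.inl u ∧ q = Sum.inr v) ∨ (p = Sum.inr v ∧ q = Sum.inl u))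
  symm := ⟨by rintro p q ⟨u, v, h1, h2, h3, hc⟩; exact ⟨u, v, h1, h2, h3, by tauto⟩⟩
  loopless := ⟨by
    rintro p ⟨u, v, _, _, _, ⟨h1, h2⟩ | ⟨h1, h2⟩⟩ <;> rw [h1] at h2 <;> exact absurd h2 (by simp)⟩

/-- A language is suffix-connected if for every nonempty word `w ∈ L` there exists a depth
`1 ≤ d ≤ |w|+1` such that the natural embedding of the left extensions of `w` in the
extension graph `E_{d,d}(tail^{d-1} w)` lies in a single connected component. -/
def SuffixConnected (L : Set (List A)) : Prop :=
  ∀ w ∈ L, w ≠ [] → ∃ d : ℕ, 1 ≤ d ∧ d ≤ w.length + 1 ∧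
    ∀ a b : A, a :: w ∈ L → b :: w ∈ L →
      (extGraphK L d (w.drop (d - 1))).Reachable
        (Sum.inl (a :: w.take (d - 1))) (Sum.inl (b :: w.take (d - 1)))

open Classical in
/-- The number of occurrences of `u` in `w`. -/
noncomputable def occCount (u w : List A) : ℕ :=
  (List.range (w.length + 1)).countP fun i => decide (u <+: w.drop i)

/-- The return set `R_{u,v}`. -/
noncomputable def ReturnSet (L : Set (List A)) (u v : List A) : Set (List A) :=
  {r | r ∈ L ∧ u ++ r ++ v ∈ L ∧ (u ++ v) <+: (u ++ r ++ v) ∧ (u ++ v) <:+ (u ++ r ++ v) ∧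
    occCount (u ++ v) (u ++ r ++ v) = 2}

end Prelude

/-!
Fold `G_{1,1}` by sending the vertex `[a]` to the component of the left vertex `a` of `E(ε)`.
An edge `[a] → [b]` comes from a word `ab ∈ L`, which also joins the left vertex `a` to the
right vertex `b` in `E(ε)`; so all edges labeled `b` fold onto a single edge, from the component
of the right vertex `b` to that of the left vertex `b`. Walks in `E(ε)` lift to paths in
`G_{1,1}`, hence folding does not change the group. The folded graph is connected by
recurrence, has `c` vertices and exactly one edge per letter, and a spanning tree shows that its
group is free on the `n - (c - 1)` edges outside the tree.
-/

namespace LDigraph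

variable {A V W : Type*} {G : LDigraph V A}

theorem Step.symm {u v : V} {g : FreeGroup A} (h : G.Step u v g) : G.Step v u g⁻¹ := by
  cases h with
  | fwd h => exact .bwd h
  | bwd h => rw [inv_inv]; exact .fwd h

theorem Step.pathLabel {u v : V} {g : FreeGroup A} (s : G.Step u v g) : G.PathLabel u v g :=
  mul_one g ▸ .cons s (.nil v)

theorem PathLabel.trans {u v w : V} {g h : FreeGroup A} (p : G.PathLabel u v g)
    (q : G.PathLabel v w h) : G.PathLabel u w (g * h) := by
  induction p with
  | nil x => exact (one_mul h).symm ▸ q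
  | cons s _ ih => rw [mul_assoc]; exact .cons s (ih q)

theorem PathLabel.inv {u v : V} {g : FreeGroup A} (p : G.PathLabel u v g) :
    G.PathLabel v u g⁻¹ := by
  induction p with
  | nil x => rw [inv_one]; exact .nil x
  | cons s _ ih => rw [mul_inv_rev]; exact ih.trans s.symm.pathLabel

theorem PathLabel.map {G' : LDigraph W A} (f : V → W)
    (hf : ∀ u a v, (u, a, v) ∈ G.E → (f u, a, f v) ∈ G'.E) {u v : V} {g : FreeGroup A}
    (p : G.PathLabel u v g) : G'.PathLabel (f u) (f v) g := by
  induction p with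
  | nil x => exact .nil _
  | cons s _ ih =>
    cases s with
    | fwd h => exact .cons (.fwd (hf _ _ _ h)) ih
    | bwd h => exact .cons (.bwd (hf _ _ _ h)) ih

theorem PathLabel.exists_step_of_mem_of_notMem {S : Set V} {u v : V} {g : FreeGroup A}
    (p : G.PathLabel u v g) (hu : u ∈ S) (hv : v ∉ S) :
    ∃ x ∈ S, ∃ y ∉ S, ∃ h, G.Step x y h := by
  induction p with
  | nil x => exact absurd hu hv
  | @cons x y z g h s p ih =>
    by_cases hy : y ∈ S
    · exact ih hy hv
    · exact ⟨x, hu, y, hy, g, s⟩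

def loopGroup (G : LDigraph V A) (x : V) : Subgroup (FreeGroup A) where
  carrier := G.loopLabels x
  mul_mem' := PathLabel.trans
  one_mem' := .nil x
  inv_mem' := PathLabel.inv

@[simp]
theorem mem_loopGroup {x : V} {g : FreeGroup A} : g ∈ G.loopGroup x ↔ G.PathLabel x x g :=
  Iff.rfl

def ofEndpoints (src tgt : A → V) : LDigraph V A :=
  ⟨Set.range fun b => (src b, b, tgt b)⟩

section OfEndpoints

variable {src tgt : A → V}

theorem ofEndpoints_step_iff {x y : V} {g : FreeGroup A} :
    (ofEndpoints src tgt).Step x y g ↔ ∃ b, (x = src b ∧ y = tgt b ∧ g = .of b) ∨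
      (x = tgt b ∧ y = src b ∧ g = (FreeGroup.of b)⁻¹) := by
  constructor
  · rintro (⟨⟨b, hb⟩⟩ | ⟨⟨b, hb⟩⟩) <;> simp only [Prod.mk.injEq] at hb <;>
      obtain ⟨rfl, rfl, rfl⟩ := hb
    exacts [⟨b, .inl ⟨rfl, rfl, rfl⟩⟩, ⟨b, .inr ⟨rfl, rfl, rfl⟩⟩]
  · rintro ⟨b, ⟨rfl, rfl, rfl⟩ | ⟨rfl, rfl, rfl⟩⟩
    exacts [.fwd ⟨b, rfl⟩, .bwd ⟨b, rfl⟩]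

theorem mul_mul_inv_mem_of_pathLabel (t : V → FreeGroup A) {K : Subgroup (FreeGroup A)}
    (hK : ∀ b, t (src b) * .of b * (t (tgt b))⁻¹ ∈ K) {u v : V} {g : FreeGroup A}
    (p : (ofEndpoints src tgt).PathLabel u v g) : t u * g * (t v)⁻¹ ∈ K := by
  induction p with
  | nil x => simp [one_mem]
  | @cons x y z g h s _ ih =>
    obtain ⟨b, ⟨rfl, rfl, rfl⟩ | ⟨rfl, rfl, rfl⟩⟩ := ofEndpoints_step_iff.1 s
    · simpa [mul_assoc] using mul_mem (hK b) ih
    · simpa [mul_assoc] using mul_mem (inv_mem (hK b)) ih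

/-- `T` is a spanning tree of the vertex set `S` rooted at `v₀`, and `t v` is the label of the
path in `T` from `v₀` to `v`. -/
structure IsTreeOn (src tgt : A → V) (v₀ : V) (S : Finset V) (T : Finset A)
    (t : V → FreeGroup A) : Prop where
  base_mem : v₀ ∈ S
  apply_base : t v₀ = 1
  pathLabel : ∀ v ∈ S, (ofEndpoints src tgt).PathLabel v₀ v (t v)
  mem_closure : ∀ v ∈ S, t v ∈ Subgroup.closure (FreeGroup.of '' (T : Set A))
  src_mem : ∀ b ∈ T, src b ∈ S
  tgt_mem : ∀ b ∈ T, tgt b ∈ S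
  apply_tgt : ∀ b ∈ T, t (tgt b) = t (src b) * .of b
  card_eq : T.card + 1 = S.card

theorem isTreeOn_singleton (v₀ : V) : IsTreeOn src tgt v₀ {v₀} ∅ fun _ => 1 where
  base_mem := Finset.mem_singleton_self v₀
  apply_base := rfl
  pathLabel v hv := by rw [Finset.mem_singleton.1 hv]; exact .nil v₀
  mem_closure _ _ := one_mem _
  src_mem := by simp
  tgt_mem := by simp
  apply_tgt := by simp
  card_eq := rfl

theorem IsTreeOn.exists_insert [DecidableEq V] {v₀ v : V} {S : Finset V} {T : Finset A}
    {t : V → FreeGroup A} (h : IsTreeOn src tgt v₀ S T t) {g : FreeGroup A}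
    (p : (ofEndpoints src tgt).PathLabel v₀ v g) (hv : v ∉ S) :
    ∃ w ∉ S, ∃ T' t', IsTreeOn src tgt v₀ (insert w S) T' t' := by
  classical
  obtain ⟨x, hx, y, hy, g, s⟩ := p.exists_step_of_mem_of_notMem (S := ↑S) h.base_mem hv
  simp only [Finset.mem_coe] at hx hy
  obtain ⟨b, hb⟩ := ofEndpoints_step_iff.1 s
  have hbT : b ∉ T := fun hbT => by
    rcases hb with ⟨-, rfl, -⟩ | ⟨-, rfl, -⟩
    exacts [hy (h.tgt_mem b hbT), hy (h.src_mem b hbT)]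
  have hne : ∀ v ∈ S, v ≠ y := fun v hv hvy => hy (hvy ▸ hv)
  have hmono : Subgroup.closure (FreeGroup.of '' (T : Set A)) ≤
      Subgroup.closure (FreeGroup.of '' (insert b T : Finset A)) :=
    Subgroup.closure_mono (Set.image_mono (by simp [Set.subset_insert]))
  have hg : g ∈ Subgroup.closure (FreeGroup.of '' (insert b T : Finset A)) := by
    have hb' := Subgroup.subset_closure (k := FreeGroup.of '' (insert b T : Finset A))
      ⟨b, by simp, rfl⟩
    rcases hb with ⟨-, -, rfl⟩ | ⟨-, -, rfl⟩
    exacts [hb', inv_mem hb']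
  refine ⟨y, hy, insert b T, Function.update t y (t x * g), ?_⟩
  constructor
  · exact Finset.mem_insert_of_mem h.base_mem
  · rw [Function.update_of_ne (hne _ h.base_mem), h.apply_base]
  · intro v hv
    rcases Finset.mem_insert.1 hv with rfl | hv
    · rw [Function.update_self]; exact (h.pathLabel x hx).trans s.pathLabel
    · rw [Function.update_of_ne (hne v hv)]; exact h.pathLabel v hv
  · intro v hv
    rcases Finset.mem_insert.1 hv with rfl | hv
    · rw [Function.update_self]; exact mul_mem (hmono (h.mem_closure x hx)) hg
    · rw [Function.update_of_ne (hne v hv)]; exact hmono (h.mem_closure v hv)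
  · intro c hc
    rcases Finset.mem_insert.1 hc with rfl | hc
    · rcases hb with ⟨rfl, rfl, -⟩ | ⟨-, rfl, -⟩ <;> simp [hx]
    · exact Finset.mem_insert_of_mem (h.src_mem c hc)
  · intro c hc
    rcases Finset.mem_insert.1 hc with rfl | hc
    · rcases hb with ⟨-, rfl, -⟩ | ⟨rfl, rfl, -⟩ <;> simp [hx]
    · exact Finset.mem_insert_of_mem (h.tgt_mem c hc)
  · intro c hc
    rcases Finset.mem_insert.1 hc with rfl | hc
    · rcases hb with ⟨rfl, rfl, rfl⟩ | ⟨rfl, rfl, rfl⟩ <;>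
        simp [Function.update_of_ne (hne _ hx)]
    · rw [Function.update_of_ne (hne _ (h.tgt_mem c hc)),
        Function.update_of_ne (hne _ (h.src_mem c hc)), h.apply_tgt c hc]
  · rw [Finset.card_insert_of_notMem hbT, Finset.card_insert_of_notMem hy, h.card_eq]

theorem exists_isTreeOn_univ [Fintype V] (hconn : (ofEndpoints src tgt).Connected) (v₀ : V) :
    ∃ T t, IsTreeOn src tgt v₀ Finset.univ T t := by
  classical
  suffices ∀ S, (∃ T t, IsTreeOn src tgt v₀ S T t) → ∃ T t, IsTreeOn src tgt v₀ .univ T t from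
    this {v₀} ⟨∅, _, isTreeOn_singleton v₀⟩
  intro S
  induction S using WellFoundedGT.induction with
  | _ S ih =>
    rintro ⟨T, t, h⟩
    by_cases hS : ∀ v, v ∈ S
    · exact Finset.eq_univ_iff_forall.2 hS ▸ ⟨T, t, h⟩
    obtain ⟨v, hv⟩ := not_forall.1 hS
    obtain ⟨g, p⟩ := hconn v₀ v
    obtain ⟨w, hw, T', t', h'⟩ := h.exists_insert p hv
    exact ih _ (Finset.ssubset_insert hw) ⟨T', t', h'⟩

def schreierHom (src tgt : A → V) (t : V → FreeGroup A) (T : Finset A) :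
    FreeGroup {b // b ∉ T} →* FreeGroup A :=
  FreeGroup.lift fun b => t (src b) * .of b * (t (tgt b))⁻¹

def collapse [DecidableEq A] (T : Finset A) : FreeGroup A →* FreeGroup {b // b ∉ T} :=
  FreeGroup.lift fun b => if h : b ∈ T then 1 else .of ⟨b, h⟩

section SpanningTree

variable [Fintype V] {v₀ : V} {T : Finset A} {t : V → FreeGroup A}

theorem IsTreeOn.collapse_comp_schreierHom [DecidableEq A]
    (h : IsTreeOn src tgt v₀ .univ T t) :
    (collapse T).comp (schreierHom src tgt t T) = MonoidHom.id _ := by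
  have hker : ∀ v, collapse T (t v) = 1 := by
    have : Subgroup.closure (FreeGroup.of '' (T : Set A)) ≤ (collapse T).ker := by
      rw [Subgroup.closure_le]
      rintro _ ⟨b, hb, rfl⟩
      simp [collapse, Finset.mem_coe.1 hb]
    exact fun v => this (h.mem_closure v (Finset.mem_univ v))
  refine FreeGroup.ext_hom _ _ fun b => ?_
  simp only [MonoidHom.comp_apply, schreierHom, FreeGroup.lift_apply_of, map_mul, map_inv, hker]
  simp [collapse, b.2]

theorem IsTreeOn.range_schreierHom (h : IsTreeOn src tgt v₀ .univ T t) :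
    (schreierHom src tgt t T).range = (ofEndpoints src tgt).loopGroup v₀ := by
  refine le_antisymm (FreeGroup.range_lift_le ?_) fun g hg => ?_
  · rintro _ ⟨b, rfl⟩
    have hb : (ofEndpoints src tgt).Step (src b) (tgt b) (.of b) := .fwd (Set.mem_range_self _)
    exact ((h.pathLabel _ (Finset.mem_univ _)).trans hb.pathLabel).trans
      (h.pathLabel _ (Finset.mem_univ _)).inv
  · have hgen : ∀ b, t (src b) * .of b * (t (tgt b))⁻¹ ∈ (schreierHom src tgt t T).range := by
      intro b
      by_cases hb : b ∈ T
      · simp [h.apply_tgt b hb, one_mem]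
      · exact ⟨.of ⟨b, hb⟩, FreeGroup.lift_apply_of⟩
    simpa [h.apply_base] using mul_mul_inv_mem_of_pathLabel t hgen hg

end SpanningTree

theorem exists_loopGroup_ofEndpoints_mulEquiv [Fintype A] [Finite V]
    (hconn : (ofEndpoints src tgt).Connected) (v₀ : V) :
    ∃ k, k + Nat.card V = Fintype.card A + 1 ∧
      Nonempty ((ofEndpoints src tgt).loopGroup v₀ ≃* FreeGroup (Fin k)) := by
  classical
  cases nonempty_fintype V
  obtain ⟨T, t, h⟩ := exists_isTreeOn_univ hconn v₀
  have hinj : Function.Injective (schreierHom src tgt t T) :=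
    Function.LeftInverse.injective (g := collapse T) fun y =>
      DFunLike.congr_fun h.collapse_comp_schreierHom y
  refine ⟨Fintype.card {b // b ∉ T}, ?_, ⟨(MulEquiv.subgroupCongr h.range_schreierHom).symm.trans
    ((MonoidHom.ofInjective hinj).symm.trans (FreeGroup.freeGroupCongr (Fintype.equivFin _)))⟩⟩
  rw [Fintype.card_subtype_compl, Fintype.card_coe, Nat.card_eq_fintype_card,
    ← Finset.card_univ (α := V), ← h.card_eq]
  have := Finset.card_le_univ T
  omega

end OfEndpoints

end LDigraph

section Rauzy

variable {A : Type*} {L : Set (List A)}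

open LDigraph

theorem mem_rauzy_one_one_E {e : List A × A × List A} :
    e ∈ (rauzy L 1 1).E ↔ ∃ a b, [a, b] ∈ L ∧ e = ([a], b, [b]) := by
  constructor
  · rintro ⟨x, c, hxL, hlen, hget, rfl⟩
    obtain ⟨a, b, rfl⟩ := List.length_eq_two.1 hlen
    obtain rfl : b = c := by simpa using hget
    exact ⟨a, b, hxL, rfl⟩
  · rintro ⟨a, b, h, rfl⟩
    exact ⟨[a, b], b, h, rfl, rfl, rfl⟩

theorem rauzy_one_one_step {a b : A} (h : [a, b] ∈ L) : (rauzy L 1 1).Step [a] [b] (.of b) :=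
  .fwd (mem_rauzy_one_one_E.2 ⟨a, b, h, rfl⟩)

theorem FactorClosed.rauzy_one_one_pathLabel (hL : FactorClosed L) {a b : A} (u : List A)
    (h : a :: (u ++ [b]) ∈ L) : (rauzy L 1 1).PathLabel [a] [b] (wordToFG (u ++ [b])) := by
  induction u generalizing a with
  | nil => simpa [wordToFG] using (rauzy_one_one_step h).pathLabel
  | cons c u ih =>
    have hac : [a, c] ∈ L := hL _ h _ ⟨[], u ++ [b], by simp⟩
    have hcub : c :: (u ++ [b]) ∈ L := hL _ h _ ⟨[a], [], by simp⟩
    simpa [wordToFG] using (rauzy_one_one_step hac).pathLabel.trans (ih hcub)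

theorem Recurrent.exists_rauzy_one_one_pathLabel (hL : Recurrent L) (hA : ∀ a : A, [a] ∈ L)
    (a b : A) : ∃ g, (rauzy L 1 1).PathLabel [a] [b] g := by
  obtain ⟨u, -, hu⟩ := hL.2 [a] (hA a) [b] (hA b)
  exact ⟨_, hL.1.rauzy_one_one_pathLabel u (by simpa using hu)⟩

theorem Recurrent.exists_cons_mem (hL : Recurrent L) (hA : ∀ a : A, [a] ∈ L) (b : A) :
    ∃ a, [a, b] ∈ L := by
  obtain ⟨u, hu, hbub⟩ := hL.2 [b] (hA b) [b] (hA b)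
  refine ⟨u.getLast hu, hL.1 _ hbub _ ⟨b :: u.dropLast, [], ?_⟩⟩
  conv_rhs => rw [← List.dropLast_append_getLast hu]
  simp

/-- A walk in `E(ε)` traces a path in `G_{1,1}`: `inl a` stands for the vertex `[a]`, and
`inr b` for the vertex `[b]` just after an edge labeled `b`. -/
theorem rauzy_one_one_pathLabel_of_reachable {s u : A ⊕ A}
    (h : (extGraph L []).Reachable s u) :
    (rauzy L 1 1).PathLabel [s.elim id id] [u.elim id id]
      ((s.elim (fun _ => 1) .of)⁻¹ * u.elim (fun _ => 1) .of) := by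
  obtain ⟨w⟩ := h
  induction w with
  | nil => simpa using .nil _
  | cons hadj _ ih =>
    obtain ⟨a, b, hab, ⟨rfl, rfl⟩ | ⟨rfl, rfl⟩⟩ := hadj
    · simpa using (rauzy_one_one_step hab).pathLabel.trans ih
    · simpa [mul_assoc] using (rauzy_one_one_step hab).symm.pathLabel.trans ih

theorem connectedComponentMk_inl_eq_inr {a b : A} (h : [a, b] ∈ L) :
    (extGraph L []).connectedComponentMk (.inl a) =
      (extGraph L []).connectedComponentMk (.inr b) :=
  SimpleGraph.ConnectedComponent.sound (SimpleGraph.Adj.reachable ⟨a, b, h, .inl ⟨rfl, rfl⟩⟩)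

theorem surjective_connectedComponentMk_inl (hleft : ∀ b : A, ∃ a, [a, b] ∈ L) :
    Function.Surjective fun a => (extGraph L []).connectedComponentMk (.inl a) := by
  intro r
  induction r using SimpleGraph.ConnectedComponent.ind with
  | h s =>
    cases s with
    | inl a => exact ⟨a, rfl⟩
    | inr b =>
      obtain ⟨a, h⟩ := hleft b
      exact ⟨a, connectedComponentMk_inl_eq_inr h⟩

theorem rauzy_one_one_pathLabel_of_inl_eq_inr {a b : A}
    (h : (extGraph L []).connectedComponentMk (.inl a) =
      (extGraph L []).connectedComponentMk (.inr b)) :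
    (rauzy L 1 1).PathLabel [a] [b] (.of b) := by
  simpa using rauzy_one_one_pathLabel_of_reachable (SimpleGraph.ConnectedComponent.exact h)

theorem rauzy_one_one_pathLabel_of_inl_eq_inl {a b : A}
    (h : (extGraph L []).connectedComponentMk (.inl a) =
      (extGraph L []).connectedComponentMk (.inl b)) :
    (rauzy L 1 1).PathLabel [a] [b] 1 := by
  simpa using rauzy_one_one_pathLabel_of_reachable (SimpleGraph.ConnectedComponent.exact h)

def foldedRauzy (L : Set (List A)) : LDigraph (extGraph L []).ConnectedComponent A :=
  ofEndpoints (fun b => (extGraph L []).connectedComponentMk (.inr b))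
    (fun a => (extGraph L []).connectedComponentMk (.inl a))

theorem LDigraph.PathLabel.fold_rauzy_one_one {a b : A} {g : FreeGroup A}
    (p : (rauzy L 1 1).PathLabel [a] [b] g) :
    (foldedRauzy L).PathLabel ((extGraph L []).connectedComponentMk (.inl a))
      ((extGraph L []).connectedComponentMk (.inl b)) g := by
  refine p.map (fun w => (extGraph L []).connectedComponentMk (.inl (w.headD a))) ?_
  intro u c v huv
  obtain ⟨d, c, hdc, he⟩ := mem_rauzy_one_one_E.1 huv
  simp only [Prod.mk.injEq] at he
  obtain ⟨rfl, rfl, rfl⟩ := he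
  exact ⟨c, by simp [connectedComponentMk_inl_eq_inr hdc]⟩

theorem LDigraph.PathLabel.exists_lift_rauzy_one_one (hleft : ∀ b : A, ∃ a, [a, b] ∈ L)
    {r r' : (extGraph L []).ConnectedComponent} {g : FreeGroup A}
    (p : (foldedRauzy L).PathLabel r r' g) (a : A)
    (ha : (extGraph L []).connectedComponentMk (.inl a) = r) :
    ∃ a', (extGraph L []).connectedComponentMk (.inl a') = r' ∧
      (rauzy L 1 1).PathLabel [a] [a'] g := by
  induction p generalizing a with
  | nil => exact ⟨a, ha, .nil _⟩
  | cons s _ ih =>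
    obtain ⟨b, ⟨rfl, rfl, rfl⟩ | ⟨rfl, rfl, rfl⟩⟩ := ofEndpoints_step_iff.1 s
    · obtain ⟨a', ha', p⟩ := ih b rfl
      exact ⟨a', ha', (rauzy_one_one_pathLabel_of_inl_eq_inr ha).trans p⟩
    · obtain ⟨c, hcb⟩ := hleft b
      obtain ⟨a', ha', p⟩ := ih c (connectedComponentMk_inl_eq_inr hcb)
      refine ⟨a', ha', ?_⟩
      simpa using (rauzy_one_one_pathLabel_of_inl_eq_inl ha).trans
        ((rauzy_one_one_step hcb).symm.pathLabel.trans p)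

theorem loopGroup_rauzy_one_one (hleft : ∀ b : A, ∃ a, [a, b] ∈ L) (a : A) :
    (rauzy L 1 1).loopGroup [a] =
      (foldedRauzy L).loopGroup ((extGraph L []).connectedComponentMk (.inl a)) := by
  ext g
  refine ⟨PathLabel.fold_rauzy_one_one, fun hg => ?_⟩
  obtain ⟨a', ha', p⟩ := PathLabel.exists_lift_rauzy_one_one hleft hg a rfl
  simpa using p.trans (rauzy_one_one_pathLabel_of_inl_eq_inl ha')

theorem Recurrent.foldedRauzy_connected (hL : Recurrent L) (hA : ∀ a : A, [a] ∈ L) :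
    (foldedRauzy L).Connected := by
  have hsurj := surjective_connectedComponentMk_inl (hL.exists_cons_mem hA)
  intro r r'
  obtain ⟨a, rfl⟩ := hsurj r
  obtain ⟨b, rfl⟩ := hsurj r'
  obtain ⟨g, p⟩ := hL.exists_rauzy_one_one_pathLabel hA a b
  exact ⟨g, p.fold_rauzy_one_one⟩

end Rauzy

theorem rauzyGroup_G11_rank_general {A : Type*} [Fintype A] (L : Set (List A)) (hrec : Recurrent L)
    (hA : ∀ a : A, [a] ∈ L) (x : List A) (hlen : x.length = 1) :
    ∃ H : Subgroup (FreeGroup A), (H : Set (FreeGroup A)) = (rauzy L 1 1).loopLabels x ∧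
      Nonempty (H ≃* FreeGroup (Fin
        (Fintype.card A - Nat.card (extGraph L ([] : List A)).ConnectedComponent + 1))) := by
  obtain ⟨a, rfl⟩ := List.length_eq_one_iff.1 hlen
  have hleft := hrec.exists_cons_mem hA
  obtain ⟨k, hk, ⟨e⟩⟩ := LDigraph.exists_loopGroup_ofEndpoints_mulEquiv
    (hrec.foldedRauzy_connected hA) ((extGraph L []).connectedComponentMk (.inl a))
  have hc : Nat.card (extGraph L []).ConnectedComponent ≤ Fintype.card A := by
    simpa using Nat.card_le_card_of_surjective _ (surjective_connectedComponentMk_inl hleft)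
  refine ⟨_, congrArg SetLike.coe (loopGroup_rauzy_one_one hleft a).symm, ⟨e.trans
    (FreeGroup.freeGroupCongr (finCongr (by omega)))⟩⟩

/-- The group of the Rauzy graph `G_{1,1}` at any vertex is free of rank `n - c + 1`, where
`n = Card A` and `c` is the number of connected components of the extension graph of the
empty word. -/
theorem rauzyGroup_G11_rank {A : Type*} [Fintype A] (L : Set (List A)) (hrec : Recurrent L)
    (hA : ∀ a : A, [a] ∈ L) (x : List A) (hx : x ∈ L) (hlen : x.length = 1) :
    ∃ H : Subgroup (FreeGroup A), (H : Set (FreeGroup A)) = (rauzy L 1 1).loopLabels x ∧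
      Nonempty (H ≃* FreeGroup (Fin
        (Fintype.card A - Nat.card (extGraph L ([] : List A)).ConnectedComponent + 1))) :=
  rauzyGroup_G11_rank_general L hrec hA x hlen
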